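/- arXiv:2210.04148 — 5 statements merged into one kernel-verified Lean document; each statement's English description precedes it below -/
import Mathlib

section
/- For every 0 < ε < 1 there exists C > 0 such that for all 0 < x < 1, ∫₀ˣ (1-s)^{-ε} F(s,x) ds ≤ C x². -/
open MeasureTheory Real

/-- The function `F(s,x) = -(x·ln(s/x) + (1-x)·ln((1-s)/(1-x)))`. -/
noncomputable def Faux (s x : ℝ) : ℝ :=
  -(x * Real.log (s / x) + (1 - x) * Real.log ((1 - s) / (1 - x)))

lemma log_le_two_sqrt {t : ℝ} (ht : 0 < t) : Real.log t ≤ 2 * Real.sqrt t := by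
  have h1 : Real.log (Real.sqrt t) ≤ Real.sqrt t - 1 :=
    Real.log_le_sub_one_of_pos (Real.sqrt_pos.mpr ht)
  have h2 : Real.log (Real.sqrt t) = Real.log t / 2 := Real.log_sqrt ht.le
  have h3 : 0 ≤ Real.sqrt t := Real.sqrt_nonneg t
  linarith

lemma Faux_nonneg {s x : ℝ} (hs : 0 < s) (hsx : s < x) (hx1 : x < 1) : 0 ≤ Faux s x := by
  have hx0 : 0 < x := hs.trans hsx
  have h1x : 0 < 1 - x := by linarith
  have h1 : Real.log (s / x) ≤ s / x - 1 := Real.log_le_sub_one_of_pos (by positivity)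
  have h2 : Real.log ((1 - s) / (1 - x)) ≤ (1 - s) / (1 - x) - 1 :=
    Real.log_le_sub_one_of_pos (div_pos (by linarith) h1x)
  have e1 : x * (s / x - 1) = s - x := by
    field_simp [hx0.ne']
  have e2 : (1 - x) * ((1 - s) / (1 - x) - 1) = x - s := by
    field_simp [h1x.ne']
    try ring
  have b1 : x * Real.log (s / x) ≤ s - x := by
    calc x * Real.log (s / x) ≤ x * (s / x - 1) := by
          exact mul_le_mul_of_nonneg_left h1 hx0.le
      _ = s - x := e1
  have b2 : (1 - x) * Real.log ((1 - s) / (1 - x)) ≤ x - s := by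
    calc (1 - x) * Real.log ((1 - s) / (1 - x)) ≤ (1 - x) * ((1 - s) / (1 - x) - 1) := by
          exact mul_le_mul_of_nonneg_left h2 h1x.le
      _ = x - s := e2
  unfold Faux; linarith

lemma Faux_le {s x : ℝ} (hs : 0 < s) (hsx : s < x) (hx1 : x < 1) :
    Faux s x ≤ x * Real.log (x / s) := by
  have hx0 : 0 < x := hs.trans hsx
  have h1x : 0 < 1 - x := by linarith
  have hlog : Real.log (s / x) = -Real.log (x / s) := by
    rw [← Real.log_inv]; congr 1; field_simp
  have hr : (1:ℝ) ≤ (1 - s) / (1 - x) := (one_le_div h1x).mpr (by linarith)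
  have h2 : 0 ≤ Real.log ((1 - s) / (1 - x)) := Real.log_nonneg hr
  have h3 : 0 ≤ (1 - x) * Real.log ((1 - s) / (1 - x)) := mul_nonneg h1x.le h2
  unfold Faux
  rw [hlog]
  nlinarith

theorem stmt_1 (ε : ℝ) (hε0 : 0 < ε) (hε1 : ε < 1) :
    ∃ C : ℝ, 0 < C ∧ ∀ x : ℝ, 0 < x → x < 1 →
      (∫ s in Set.Ioo (0:ℝ) x, (1 - s) ^ (-ε) * Faux s x) ≤ C * x ^ 2 := by
  have h1ε : 0 < 1 - ε := by linarith
  refine ⟨40 + 4 / (1 - ε), by positivity, ?_⟩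
  intro x hx0 hx1
  -- nonnegativity of the integrand a.e. on Ioo 0 x
  have hnonneg : (0 : ℝ → ℝ) ≤ᵐ[volume.restrict (Set.Ioo (0:ℝ) x)]
      fun s => (1 - s) ^ (-ε) * Faux s x := by
    refine (ae_restrict_iff' measurableSet_Ioo).mpr (ae_of_all _ ?_)
    intro s hs
    have h1s : (0:ℝ) ≤ 1 - s := by linarith [hs.2, hx1]
    exact mul_nonneg (Real.rpow_nonneg h1s _) (Faux_nonneg hs.1 hs.2 hx1)
  -- generic bound: (1-s)^(-ε) ≤ 2 when s ≤ 1/2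
  have hw2 : ∀ s : ℝ, s ≤ 1/2 → (1 - s) ^ (-ε) ≤ 2 := by
    intro s hs
    have h1 : (1 - s) ^ (-ε) ≤ ((1:ℝ)/2) ^ (-ε) :=
      Real.rpow_le_rpow_of_nonpos (by norm_num) (by linarith) (by linarith)
    have h2 : ((1:ℝ)/2) ^ (-ε) = 2 ^ ε := by
      rw [one_div, Real.inv_rpow (by norm_num : (0:ℝ) ≤ 2), Real.rpow_neg (by norm_num), inv_inv]
    have h3 : (2:ℝ) ^ ε ≤ 2 ^ (1:ℝ) := Real.rpow_le_rpow_of_exponent_le one_le_two hε1.le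
    rw [Real.rpow_one] at h3
    rw [h2] at h1
    linarith
  rcases le_or_gt x (1/2) with hxh | hxh
  · -- Case x ≤ 1/2 : majorant 4 x √x · s^(-1/2)
    set g : ℝ → ℝ := fun s => 4 * x * Real.sqrt x * s ^ (-(1/2) : ℝ) with hg
    have hgi : IntegrableOn g (Set.Ioo (0:ℝ) x) := by
      have : IntervalIntegrable (fun s : ℝ => s ^ (-(1/2) : ℝ)) volume 0 x :=
        intervalIntegral.intervalIntegrable_rpow' (by norm_num)
      rw [intervalIntegrable_iff_integrableOn_Ioo_of_le hx0.le] at this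
      exact (this.const_mul _)
    have hle : (fun s => (1 - s) ^ (-ε) * Faux s x) ≤ᵐ[volume.restrict (Set.Ioo (0:ℝ) x)] g := by
      refine (ae_restrict_iff' measurableSet_Ioo).mpr (ae_of_all _ ?_)
      intro s hs
      obtain ⟨hs0, hsx⟩ := hs
      show (1 - s) ^ (-ε) * Faux s x ≤ g s
      have hw : (1 - s) ^ (-ε) ≤ 2 := hw2 s (by linarith)
      have hF0 : 0 ≤ Faux s x := Faux_nonneg hs0 hsx hx1
      have hFle : Faux s x ≤ x * Real.log (x / s) := Faux_le hs0 hsx hx1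
      have hxs1 : (1:ℝ) < x / s := (one_lt_div hs0).mpr hsx
      have hlogpos : 0 ≤ Real.log (x / s) := Real.log_nonneg hxs1.le
      have step1 : (1 - s) ^ (-ε) * Faux s x ≤ 2 * (x * Real.log (x / s)) :=
        mul_le_mul hw hFle hF0 (by norm_num)
      have step2 : Real.log (x / s) ≤ 2 * Real.sqrt (x / s) := log_le_two_sqrt (by positivity)
      have hsq : Real.sqrt (x / s) = Real.sqrt x / Real.sqrt s := Real.sqrt_div hx0.le s
      have hsinv : s ^ (-(1/2) : ℝ) = (Real.sqrt s)⁻¹ := by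
        rw [Real.rpow_neg hs0.le, Real.sqrt_eq_rpow]
      have hs5 : 0 < Real.sqrt s := Real.sqrt_pos.mpr hs0
      have step3 : 2 * (x * Real.log (x / s)) ≤ g s := by
        rw [hg]; simp only
        rw [hsinv]
        have : 2 * (x * Real.log (x / s)) ≤ 2 * (x * (2 * (Real.sqrt x / Real.sqrt s))) := by
          have := mul_le_mul_of_nonneg_left (hsq ▸ step2) hx0.le
          linarith
        calc 2 * (x * Real.log (x / s)) ≤ 2 * (x * (2 * (Real.sqrt x / Real.sqrt s))) := this
          _ = 4 * x * Real.sqrt x * (Real.sqrt s)⁻¹ := by field_simp; ring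
      linarith
    have hint : (∫ s in Set.Ioo (0:ℝ) x, (1 - s) ^ (-ε) * Faux s x) ≤ ∫ s in Set.Ioo (0:ℝ) x, g s :=
      integral_mono_of_nonneg hnonneg hgi hle
    have hcalc : (∫ s in Set.Ioo (0:ℝ) x, g s) = 8 * x ^ 2 := by
      rw [← integral_Ioc_eq_integral_Ioo, ← intervalIntegral.integral_of_le hx0.le]
      rw [hg]
      simp only
      rw [intervalIntegral.integral_const_mul]
      rw [integral_rpow (Or.inl (by norm_num))]
      have h0 : (0:ℝ) ^ (-(1/2) + 1 : ℝ) = 0 := by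
        rw [Real.zero_rpow]; norm_num
      rw [h0]
      have hx12 : x ^ (-(1/2) + 1 : ℝ) = Real.sqrt x := by
        rw [Real.sqrt_eq_rpow]; norm_num
      rw [hx12]
      have : Real.sqrt x * Real.sqrt x = x := Real.mul_self_sqrt hx0.le
      field_simp
      nlinarith [this]
    rw [hcalc] at hint
    have : 8 * x ^ 2 ≤ (40 + 4 / (1 - ε)) * x ^ 2 := by
      have h4 : 0 < 4 / (1 - ε) := by positivity
      nlinarith [sq_nonneg x]
    linarith
  · -- Case x > 1/2 : majorant 4 s^(-1/2) + (1-s)^(-ε)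
    set g : ℝ → ℝ := fun s => 4 * s ^ (-(1/2) : ℝ) + (1 - s) ^ (-ε) with hg
    have hgi1 : IntegrableOn (fun s : ℝ => 4 * s ^ (-(1/2) : ℝ)) (Set.Ioo (0:ℝ) x) := by
      have : IntervalIntegrable (fun s : ℝ => s ^ (-(1/2) : ℝ)) volume 0 x :=
        intervalIntegral.intervalIntegrable_rpow' (by norm_num)
      rw [intervalIntegrable_iff_integrableOn_Ioo_of_le hx0.le] at this
      exact this.const_mul _
    have hcont : ContinuousOn (fun s : ℝ => (1 - s) ^ (-ε)) (Set.Icc 0 x) := by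
      apply ContinuousOn.rpow_const
      · exact (continuousOn_const.sub continuousOn_id)
      · intro s hs
        left
        have : s ≤ x := hs.2
        intro h
        have : (1:ℝ) - s > 0 := by linarith [hs.2]
        linarith [h ▸ this]
    have hgi2 : IntegrableOn (fun s : ℝ => (1 - s) ^ (-ε)) (Set.Ioo (0:ℝ) x) :=
      (hcont.integrableOn_Icc).mono_set Set.Ioo_subset_Icc_self
    have hgi : IntegrableOn g (Set.Ioo (0:ℝ) x) := hgi1.add hgi2
    have hle : (fun s => (1 - s) ^ (-ε) * Faux s x) ≤ᵐ[volume.restrict (Set.Ioo (0:ℝ) x)] g := by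
      refine (ae_restrict_iff' measurableSet_Ioo).mpr (ae_of_all _ ?_)
      intro s hs
      obtain ⟨hs0, hsx⟩ := hs
      show (1 - s) ^ (-ε) * Faux s x ≤ g s
      have h1s : (0:ℝ) < 1 - s := by linarith
      have hwpos : 0 ≤ (1 - s) ^ (-ε) := Real.rpow_nonneg h1s.le _
      have hF0 : 0 ≤ Faux s x := Faux_nonneg hs0 hsx hx1
      have hFle : Faux s x ≤ x * Real.log (x / s) := Faux_le hs0 hsx hx1
      have hxs1 : (1:ℝ) < x / s := (one_lt_div hs0).mpr hsx
      have hlogpos : 0 ≤ Real.log (x / s) := Real.log_nonneg hxs1.le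
      have hlog1 : Real.log (x / s) ≤ Real.log (1 / s) := by
        have hdiv : x / s ≤ 1 / s := by gcongr <;> linarith
        exact (Real.log_le_log_iff (by positivity) (by positivity)).mpr hdiv
      have hxlog : x * Real.log (x / s) ≤ Real.log (1 / s) := by
        calc x * Real.log (x / s) ≤ 1 * Real.log (x / s) :=
              mul_le_mul_of_nonneg_right hx1.le hlogpos
          _ = Real.log (x / s) := one_mul _
          _ ≤ Real.log (1 / s) := hlog1
      have hFle2 : Faux s x ≤ Real.log (1 / s) := hFle.trans hxlog
      have hspos : 0 < Real.sqrt s := Real.sqrt_pos.mpr hs0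
      have hsinv : s ^ (-(1/2) : ℝ) = (Real.sqrt s)⁻¹ := by
        rw [Real.rpow_neg hs0.le, Real.sqrt_eq_rpow]
      rcases le_or_gt s (1/2) with hsh | hsh
      · -- s ≤ 1/2
        have hw : (1 - s) ^ (-ε) ≤ 2 := hw2 s hsh
        have hlog2 : Real.log (1 / s) ≤ 2 * Real.sqrt (1 / s) := log_le_two_sqrt (by positivity)
        have hsq : Real.sqrt (1 / s) = (Real.sqrt s)⁻¹ := by
          rw [one_div, Real.sqrt_inv]
        have : (1 - s) ^ (-ε) * Faux s x ≤ 2 * (2 * (Real.sqrt s)⁻¹) := by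
          apply mul_le_mul hw (hFle2.trans ?_) hF0 (by norm_num)
          rw [← hsq]; exact hlog2
        rw [hg]; simp only
        rw [hsinv]
        have h4 : 2 * (2 * (Real.sqrt s)⁻¹) = 4 * (Real.sqrt s)⁻¹ := by ring
        linarith [this, hwpos]
      · -- s > 1/2
        have hlog2 : Real.log (1 / s) ≤ 1 := by
          have h1 : (1:ℝ) / s < 2 := by
            rw [div_lt_iff₀ hs0]; linarith
          have := Real.log_le_sub_one_of_pos (show (0:ℝ) < 1/s by positivity)
          linarith
        have : (1 - s) ^ (-ε) * Faux s x ≤ (1 - s) ^ (-ε) * 1 :=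
          mul_le_mul_of_nonneg_left (hFle2.trans hlog2) hwpos
        rw [hg]; simp only
        have h5 : 0 ≤ 4 * s ^ (-(1/2) : ℝ) := by positivity
        linarith [this]
    have hint : (∫ s in Set.Ioo (0:ℝ) x, (1 - s) ^ (-ε) * Faux s x) ≤ ∫ s in Set.Ioo (0:ℝ) x, g s :=
      integral_mono_of_nonneg hnonneg hgi hle
    have hsum : (∫ s in Set.Ioo (0:ℝ) x, g s)
        = (∫ s in Set.Ioo (0:ℝ) x, 4 * s ^ (-(1/2) : ℝ))
          + ∫ s in Set.Ioo (0:ℝ) x, (1 - s) ^ (-ε) := integral_add hgi1 hgi2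
    have hI1 : (∫ s in Set.Ioo (0:ℝ) x, 4 * s ^ (-(1/2) : ℝ)) ≤ 8 := by
      rw [← integral_Ioc_eq_integral_Ioo, ← intervalIntegral.integral_of_le hx0.le]
      rw [intervalIntegral.integral_const_mul]
      rw [integral_rpow (Or.inl (by norm_num))]
      have h0 : (0:ℝ) ^ (-(1/2) + 1 : ℝ) = 0 := by
        rw [Real.zero_rpow]; norm_num
      rw [h0]
      have hx12 : x ^ (-(1/2) + 1 : ℝ) ≤ 1 := by
        apply Real.rpow_le_one hx0.le hx1.le (by norm_num)
      have : (-(1/2 : ℝ) + 1) = 1/2 := by norm_num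
      rw [this] at hx12 ⊢
      have : (x ^ (1/2 : ℝ) - 0) / (1/2 : ℝ) = 2 * x ^ (1/2 : ℝ) := by ring
      rw [this]
      nlinarith [hx12]
    have hI2 : (∫ s in Set.Ioo (0:ℝ) x, (1 - s) ^ (-ε)) ≤ 1 / (1 - ε) := by
      rw [← integral_Ioc_eq_integral_Ioo, ← intervalIntegral.integral_of_le hx0.le]
      have hcomp : (∫ s in (0:ℝ)..x, (1 - s) ^ (-ε))
          = ∫ u in (1 - x : ℝ)..(1 - 0 : ℝ), u ^ (-ε) :=
        intervalIntegral.integral_comp_sub_left (fun u => u ^ (-ε)) 1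
      rw [hcomp]
      rw [integral_rpow (Or.inl (by linarith))]
      have h1 : (1 - (0:ℝ)) = 1 := by norm_num
      rw [h1, Real.one_rpow]
      have h2 : 0 ≤ (1 - x) ^ (1 - ε : ℝ) := Real.rpow_nonneg (by linarith) _
      have h3 : -ε + 1 = 1 - ε := by ring
      rw [h3]
      gcongr
      linarith
    have hfin : (∫ s in Set.Ioo (0:ℝ) x, g s) ≤ 8 + 1 / (1 - ε) := by
      rw [hsum]; linarith
    have hCx : 8 + 1 / (1 - ε) ≤ (40 + 4 / (1 - ε)) * x ^ 2 := by
      have hd : 0 < 1 / (1 - ε) := by positivity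
      have h14 : 4 / (1 - ε) = 4 * (1 / (1 - ε)) := by ring
      rw [h14]
      nlinarith [sq_nonneg (x - 1/2), hd, hxh]
    linarith
end

section
/- The function d(z,w) = |1-⟨z,w⟩|^{1/2} on the closed unit ball of ℂⁿ satisfies the triangle inequality: d(z,w) ≤ d(z,ξ) + d(ξ,w) for all z, w, ξ in the closed unit ball. -/
/-!
Write `a = ‖1 - ⟪x, z⟫‖` and `b = ‖1 - ⟪z, y⟫‖`. Expanding `⟪x - z, y - z⟫` gives
`1 - ⟪x, y⟫ = (1 - ⟪x, z⟫) + (1 - ⟪z, y⟫) - ((1 - ‖z‖²) + ⟪x - z, y - z⟫)`.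
On the unit ball, `1 - ‖z‖² + ‖x - z‖² ≤ 2a` and `1 - ‖z‖² + ‖y - z‖² ≤ 2b`, so by Cauchy–Schwarz
the last term has norm at most `2√a√b`, whence `‖1 - ⟪x, y⟫‖ ≤ a + b + 2√a√b = (√a + √b)²`.
-/

/-- The Hermitian inner product `⟨z,w⟩ = Σᵢ zᵢ ·conj wᵢ` (linear in the first slot). -/
noncomputable def hin {n : ℕ} (z w : EuclideanSpace ℂ (Fin n)) : ℂ :=
  ∑ i, z i * (starRingEnd ℂ) (w i)

open scoped InnerProductSpace

theorem add_mul_le_two_mul_sqrt_mul_sqrt {a b c u v : ℝ} (hc : 0 ≤ c) (hu : 0 ≤ u) (hv : 0 ≤ v)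
    (hau : c + u ^ 2 ≤ 2 * a) (hbv : c + v ^ 2 ≤ 2 * b) :
    c + u * v ≤ 2 * Real.sqrt a * Real.sqrt b := by
  have ha : 0 ≤ a := by nlinarith
  have hcs : (c + u * v) ^ 2 ≤ (c + u ^ 2) * (c + v ^ 2) := by
    nlinarith [mul_nonneg hc (sq_nonneg (u - v))]
  calc c + u * v ≤ Real.sqrt ((2 * a) * (2 * b)) :=
        (Real.le_sqrt (by positivity) (by nlinarith)).2
          (hcs.trans (mul_le_mul hau hbv (by positivity) (by positivity)))
    _ = 2 * Real.sqrt a * Real.sqrt b := by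
        rw [mul_mul_mul_comm, Real.sqrt_mul (by norm_num) (a * b), Real.sqrt_mul ha b,
          Real.sqrt_mul_self zero_le_two, mul_assoc]

section InnerProductSpace

variable {𝕜 E : Type*} [RCLike 𝕜] [NormedAddCommGroup E] [InnerProductSpace 𝕜 E]

theorem one_sub_inner_eq (x y z : E) :
    1 - ⟪x, y⟫_𝕜 = (1 - ⟪x, z⟫_𝕜) + (1 - ⟪z, y⟫_𝕜)
      - ((1 - ‖z‖ ^ 2 : ℝ) + ⟪x - z, y - z⟫_𝕜) := by
  simp only [inner_sub_left, inner_sub_right, inner_self_eq_norm_sq_to_K]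
  push_cast
  ring

theorem norm_one_sub_inner_comm (x y : E) : ‖1 - ⟪x, y⟫_𝕜‖ = ‖1 - ⟪y, x⟫_𝕜‖ := by
  rw [← inner_conj_symm, ← RCLike.norm_conj, map_sub, map_one, RingHomCompTriple.comp_apply,
    RingHom.id_apply]

theorem one_sub_norm_sq_add_norm_sub_sq_le {x z : E} (hx : ‖x‖ ≤ 1) :
    1 - ‖z‖ ^ 2 + ‖x - z‖ ^ 2 ≤ 2 * ‖1 - ⟪x, z⟫_𝕜‖ := by
  have hre : RCLike.re (1 - ⟪x, z⟫_𝕜) ≤ ‖1 - ⟪x, z⟫_𝕜‖ := RCLike.re_le_norm _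
  rw [map_sub, RCLike.one_re] at hre
  rw [@norm_sub_sq 𝕜]
  nlinarith [norm_nonneg x]

theorem sqrt_norm_one_sub_inner_le {x y z : E} (hx : ‖x‖ ≤ 1) (hy : ‖y‖ ≤ 1) (hz : ‖z‖ ≤ 1) :
    Real.sqrt ‖1 - ⟪x, y⟫_𝕜‖ ≤ Real.sqrt ‖1 - ⟪x, z⟫_𝕜‖ + Real.sqrt ‖1 - ⟪z, y⟫_𝕜‖ := by
  have hb : 1 - ‖z‖ ^ 2 + ‖y - z‖ ^ 2 ≤ 2 * ‖1 - ⟪z, y⟫_𝕜‖ := by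
    rw [norm_one_sub_inner_comm]
    exact one_sub_norm_sq_add_norm_sub_sq_le hy
  set a := ‖1 - ⟪x, z⟫_𝕜‖
  set b := ‖1 - ⟪z, y⟫_𝕜‖
  have hc : 0 ≤ 1 - ‖z‖ ^ 2 := by nlinarith [norm_nonneg z]
  have hrem : ‖((1 - ‖z‖ ^ 2 : ℝ) : 𝕜) + ⟪x - z, y - z⟫_𝕜‖ ≤ 2 * Real.sqrt a * Real.sqrt b :=
    calc _ ≤ (1 - ‖z‖ ^ 2) + ‖x - z‖ * ‖y - z‖ := by
          refine (norm_add_le _ _).trans (add_le_add ?_ (norm_inner_le_norm _ _))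
          rw [RCLike.norm_ofReal, abs_of_nonneg hc]
      _ ≤ 2 * Real.sqrt a * Real.sqrt b :=
          add_mul_le_two_mul_sqrt_mul_sqrt hc (norm_nonneg _) (norm_nonneg _)
            (one_sub_norm_sq_add_norm_sub_sq_le hx) hb
  have hsq : ‖1 - ⟪x, y⟫_𝕜‖ ≤ (Real.sqrt a + Real.sqrt b) ^ 2 :=
    calc ‖1 - ⟪x, y⟫_𝕜‖ ≤ a + b + 2 * Real.sqrt a * Real.sqrt b := by
          rw [one_sub_inner_eq x y z]
          exact (norm_sub_le _ _).trans (add_le_add (norm_add_le _ _) hrem)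
      _ = (Real.sqrt a + Real.sqrt b) ^ 2 := by
          rw [add_sq, Real.sq_sqrt (norm_nonneg _), Real.sq_sqrt (norm_nonneg _)]
          ring
  exact Real.sqrt_le_iff.2 ⟨by positivity, hsq⟩

end InnerProductSpace

theorem hin_eq_inner {n : ℕ} (z w : EuclideanSpace ℂ (Fin n)) : hin z w = ⟪w, z⟫_ℂ := by
  simp [hin, PiLp.inner_apply]

theorem stmt_6 (n : ℕ) (z w ξ : EuclideanSpace ℂ (Fin n))
    (hz : ‖z‖ ≤ 1) (hw : ‖w‖ ≤ 1) (hξ : ‖ξ‖ ≤ 1) :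
    Real.sqrt (‖1 - hin z w‖) ≤
      Real.sqrt (‖1 - hin z ξ‖) + Real.sqrt (‖1 - hin ξ w‖) := by
  simp only [hin_eq_inner]
  rw [add_comm]
  exact sqrt_norm_one_sub_inner_le hw hz hξ
end

section
/- For t > -1 and positive integers m, k, and any measurable φ:(0,1)→[0,∞), one has ℱ^{(t)}_{m+k}(M_{φ₁} 𝒢^{(t)}_m φ)(0) = (1/k) ℱ^{(t)}_{m+k}φ(0), where both sides may be +∞. -/
open MeasureTheory ENNReal

/-- `ℱ^{(t)}_m φ(s) = ∫_s^1 r^{m-1} φ(r)(1-r)^t dr`, as a Lebesgue integral with values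
in `[0,∞]`. -/
noncomputable def Fop (t : ℝ) (m : ℕ) (φ : ℝ → ℝ≥0∞) (s : ℝ) : ℝ≥0∞ :=
  ∫⁻ r in Set.Ioo s 1, ENNReal.ofReal (r ^ (m - 1) * (1 - r) ^ t) * φ r

/-- `𝒢^{(t)}_m φ(s) = ℱ^{(t)}_m φ(s) / (s^m (1-s)^{t+1})`. -/
noncomputable def Gop (t : ℝ) (m : ℕ) (φ : ℝ → ℝ≥0∞) (s : ℝ) : ℝ≥0∞ :=
  Fop t m φ s / ENNReal.ofReal (s ^ m * (1 - s) ^ (t + 1))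

/-! Multiplying `𝒢_m φ(s)` by `(1-s)` and by the weight `s^{m+k-1}(1-s)^t` of `ℱ_{m+k}` cancels
its denominator up to `s^{k-1}`, so the left side is `∫_0^1 s^{k-1} ℱ_m φ(s) ds`. Tonelli on the
triangle `0 < s < r < 1` turns this into `∫_0^1 (r^k/k) r^{m-1} (1-r)^t φ(r) dr = ℱ_{m+k} φ(0)/k`. -/

open Set

/-- Tonelli on the triangle `a < s < r < b`. -/
theorem setLIntegral_Ioo_mul_setLIntegral_Ioo_comm {μ : Measure ℝ} [SFinite μ]
    {f g : ℝ → ℝ≥0∞} (hf : Measurable f) (hg : Measurable g) (a b : ℝ) :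
    ∫⁻ s in Ioo a b, f s * ∫⁻ r in Ioo s b, g r ∂μ ∂μ =
      ∫⁻ r in Ioo a b, (∫⁻ s in Ioo a r, f s ∂μ) * g r ∂μ := by
  set H : ℝ × ℝ → ℝ≥0∞ := {q : ℝ × ℝ | q.1 < q.2}.indicator fun q => f q.1 * g q.2
  have hH : Measurable H :=
    ((hf.comp measurable_fst).mul (hg.comp measurable_snd)).indicator
      (measurableSet_lt measurable_fst measurable_snd)
  calc ∫⁻ s in Ioo a b, f s * ∫⁻ r in Ioo s b, g r ∂μ ∂μ
      = ∫⁻ s in Ioo a b, ∫⁻ r in Ioo a b, H (s, r) ∂μ ∂μ := by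
        refine setLIntegral_congr_fun measurableSet_Ioo fun s hs => ?_
        have hsection : (fun r => H (s, r)) = (Ioi s).indicator fun r => f s * g r := by
          ext r; simp [H, indicator_apply]
        have hIoo : Ioi s ∩ Ioo a b = Ioo s b :=
          Set.ext fun r => ⟨fun h => ⟨h.1, h.2.2⟩, fun h => ⟨h.1, hs.1.trans h.1, h.2⟩⟩
        rw [hsection, lintegral_indicator measurableSet_Ioi,
          Measure.restrict_restrict measurableSet_Ioi, hIoo, lintegral_const_mul _ hg]
    _ = ∫⁻ r in Ioo a b, ∫⁻ s in Ioo a b, H (s, r) ∂μ ∂μ :=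
        lintegral_lintegral_swap hH.aemeasurable
    _ = ∫⁻ r in Ioo a b, (∫⁻ s in Ioo a r, f s ∂μ) * g r ∂μ := by
        refine setLIntegral_congr_fun measurableSet_Ioo fun r hr => ?_
        have hsection : (fun s => H (s, r)) = (Iio r).indicator fun s => f s * g r := by
          ext s; simp [H, indicator_apply]
        have hIoo : Iio r ∩ Ioo a b = Ioo a r :=
          Set.ext fun s => ⟨fun h => ⟨h.2.1, h.1⟩, fun h => ⟨h.2, h.1, h.2.trans hr.2⟩⟩
        rw [hsection, lintegral_indicator measurableSet_Iio,
          Measure.restrict_restrict measurableSet_Iio, hIoo, lintegral_mul_const _ hf]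

theorem lintegral_Ioo_zero_ofReal_pow {k : ℕ} (hk : 0 < k) {r : ℝ} (hr : 0 ≤ r) :
    ∫⁻ s in Ioo 0 r, ENNReal.ofReal (s ^ (k - 1)) = ENNReal.ofReal (r ^ k) / k := by
  obtain ⟨n, rfl⟩ : ∃ n, k = n + 1 := ⟨k - 1, by omega⟩
  have hint : IntegrableOn (fun s : ℝ => s ^ n) (Ioo 0 r) :=
    (continuous_pow n).integrableOn_Ioc.mono_set Ioo_subset_Ioc_self
  rw [Nat.add_sub_cancel, ← ofReal_integral_eq_lintegral_ofReal hint
    (ae_restrict_of_forall_mem measurableSet_Ioo fun s hs => pow_nonneg hs.1.le n),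
    ← integral_Ioc_eq_integral_Ioo, ← intervalIntegral.integral_of_le hr, integral_pow,
    ENNReal.ofReal_div_of_pos (by positivity)]
  norm_cast
  simp

theorem ofReal_mul_Gop {t : ℝ} {m : ℕ} {s : ℝ} (hs : s ∈ Ioo 0 1) (φ : ℝ → ℝ≥0∞) :
    ENNReal.ofReal (s ^ m * (1 - s) ^ (t + 1)) * Gop t m φ s = Fop t m φ s := by
  have hpos : 0 < s ^ m * (1 - s) ^ (t + 1) :=
    mul_pos (pow_pos hs.1 m) (Real.rpow_pos_of_pos (sub_pos.2 hs.2) _)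
  exact ENNReal.mul_div_cancel (by simpa using hpos) ofReal_ne_top

theorem ofReal_mul_one_sub_mul_Gop {t : ℝ} {m k : ℕ} (hk : 0 < k) {s : ℝ} (hs : s ∈ Ioo 0 1)
    (φ : ℝ → ℝ≥0∞) :
    ENNReal.ofReal (s ^ (m + k - 1) * (1 - s) ^ t) * (ENNReal.ofReal (1 - s) * Gop t m φ s) =
      ENNReal.ofReal (s ^ (k - 1)) * Fop t m φ s := by
  have h1s : 0 < 1 - s := sub_pos.2 hs.2
  have hweight : ENNReal.ofReal (s ^ (m + k - 1) * (1 - s) ^ t) * ENNReal.ofReal (1 - s) =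
      ENNReal.ofReal (s ^ (k - 1)) * ENNReal.ofReal (s ^ m * (1 - s) ^ (t + 1)) := by
    rw [← ENNReal.ofReal_mul (mul_nonneg (pow_nonneg hs.1.le _) (Real.rpow_nonneg h1s.le _)),
      ← ENNReal.ofReal_mul (pow_nonneg hs.1.le _), Real.rpow_add_one h1s.ne',
      show m + k - 1 = (k - 1) + m by omega, pow_add]
    ring_nf
  rw [← ofReal_mul_Gop hs, ← mul_assoc, hweight, mul_assoc]

theorem stmt_13_general (t : ℝ) (m k : ℕ) (hm : 0 < m) (hk : 0 < k)
    (φ : ℝ → ℝ≥0∞) (hφ : Measurable φ) :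
    Fop t (m + k) (fun s => ENNReal.ofReal (1 - s) * Gop t m φ s) 0 =
      Fop t (m + k) φ 0 / (k : ℝ≥0∞) := by
  have hweight : ∀ r ∈ Ioo (0 : ℝ) 1, ENNReal.ofReal (r ^ k) / k *
      (ENNReal.ofReal (r ^ (m - 1) * (1 - r) ^ t) * φ r) =
      ENNReal.ofReal (r ^ (m + k - 1) * (1 - r) ^ t) * φ r * (k : ℝ≥0∞)⁻¹ := by
    intro r hr
    rw [show r ^ (m + k - 1) * (1 - r) ^ t = r ^ k * (r ^ (m - 1) * (1 - r) ^ t) by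
        rw [show m + k - 1 = k + (m - 1) by omega, pow_add, mul_assoc],
      ENNReal.ofReal_mul (pow_nonneg hr.1.le k), div_eq_mul_inv]
    ring
  calc Fop t (m + k) (fun s => ENNReal.ofReal (1 - s) * Gop t m φ s) 0
      = ∫⁻ s in Ioo 0 1, ENNReal.ofReal (s ^ (k - 1)) * Fop t m φ s :=
        setLIntegral_congr_fun measurableSet_Ioo fun s hs => ofReal_mul_one_sub_mul_Gop hk hs φ
    _ = ∫⁻ r in Ioo 0 1, ENNReal.ofReal (r ^ k) / k *
          (ENNReal.ofReal (r ^ (m - 1) * (1 - r) ^ t) * φ r) := by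
        simp only [Fop]
        rw [setLIntegral_Ioo_mul_setLIntegral_Ioo_comm (by fun_prop) (by fun_prop)]
        exact setLIntegral_congr_fun measurableSet_Ioo fun r hr => by
          rw [lintegral_Ioo_zero_ofReal_pow hk hr.1.le]
    _ = Fop t (m + k) φ 0 / k := by
        rw [setLIntegral_congr_fun measurableSet_Ioo hweight,
          lintegral_mul_const' _ _ (by simpa using hk.ne'), Fop, div_eq_mul_inv]

theorem stmt_13 (t : ℝ) (ht : -1 < t) (m k : ℕ) (hm : 0 < m) (hk : 0 < k)
    (φ : ℝ → ℝ≥0∞) (hφ : Measurable φ) :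
    Fop t (m + k) (fun s => ENNReal.ofReal (1 - s) * Gop t m φ s) 0 =
      Fop t (m + k) φ 0 / (k : ℝ≥0∞) :=
  stmt_13_general t m k hm hk φ hφ
end

section
/- For t > -1 and positive integers m, k, and any measurable φ:(0,1)→[0,∞), ℱ^{(t)}_{m+k}(𝒢^{(t)}_m φ)(0) = Σ_{j=0}^∞ (1/(k+j)) ℱ^{(t)}_{m+k+j} φ(0). -/
open MeasureTheory ENNReal

/-!
Since `s ^ (m + k - 1) (1 - s) ^ t / (s ^ m (1 - s) ^ (t + 1)) = ∑ⱼ s ^ (k + j - 1)` on `(0, 1)`,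
the left side is `∑ⱼ ∫₀¹ s ^ (k + j - 1) ℱ_m φ(s) ds` by monotone convergence. Exchanging the
order of integration over the triangle `0 < s < r < 1` turns each summand into
`∫₀¹ (r ^ (k + j) / (k + j)) r ^ (m - 1) (1 - r) ^ t φ(r) dr = ℱ_{m+k+j} φ(0) / (k + j)`.
-/

open Set

lemma antitone_Fop (t : ℝ) (m : ℕ) (φ : ℝ → ℝ≥0∞) : Antitone (Fop t m φ) :=
  fun _ _ hab => lintegral_mono_set fun _ hr => ⟨hab.trans_lt hr.1, hr.2⟩

lemma lintegral_Ioo_mul_lintegral_Ioo_eq {a b : ℝ} {f g : ℝ → ℝ≥0∞} (hf : Measurable f)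
    (hg : Measurable g) :
    ∫⁻ s in Ioo a b, g s * ∫⁻ r in Ioo s b, f r
      = ∫⁻ r in Ioo a b, (∫⁻ s in Ioo a r, g s) * f r := by
  let F : ℝ → ℝ → ℝ≥0∞ := fun s r => if s < r then g s * f r else 0
  have hF : Measurable (Function.uncurry F) :=
    Measurable.ite (measurableSet_lt measurable_fst measurable_snd)
      ((hg.comp measurable_fst).mul (hf.comp measurable_snd)) measurable_const
  have inner_r : ∀ s ∈ Ioo a b, ∫⁻ r in Ioo a b, F s r = g s * ∫⁻ r in Ioo s b, f r := by
    intro s hs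
    have hset : Ioi s ∩ Ioo a b = Ioo s b := by
      ext x; simp only [mem_inter_iff, mem_Ioi, mem_Ioo]; grind
    rw [← lintegral_const_mul _ hf, ← hset, ← Measure.restrict_restrict measurableSet_Ioi,
      ← lintegral_indicator measurableSet_Ioi]
    rfl
  have inner_s : ∀ r ∈ Ioo a b, ∫⁻ s in Ioo a b, F s r = (∫⁻ s in Ioo a r, g s) * f r := by
    intro r hr
    have hset : Iio r ∩ Ioo a b = Ioo a r := by rw [Iio_inter_Ioo, min_eq_left hr.2.le]
    rw [← lintegral_mul_const _ hg, ← hset, ← Measure.restrict_restrict measurableSet_Iio,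
      ← lintegral_indicator measurableSet_Iio]
    rfl
  calc ∫⁻ s in Ioo a b, g s * ∫⁻ r in Ioo s b, f r
      = ∫⁻ s in Ioo a b, ∫⁻ r in Ioo a b, F s r :=
        setLIntegral_congr_fun measurableSet_Ioo fun s hs => (inner_r s hs).symm
    _ = ∫⁻ r in Ioo a b, ∫⁻ s in Ioo a b, F s r := lintegral_lintegral_swap hF.aemeasurable
    _ = ∫⁻ r in Ioo a b, (∫⁻ s in Ioo a r, g s) * f r :=
        setLIntegral_congr_fun measurableSet_Ioo inner_s

lemma lintegral_Ioo_zero_pow_pred {n : ℕ} (hn : 0 < n) {r : ℝ} (hr : 0 ≤ r) :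
    ∫⁻ s in Ioo 0 r, ENNReal.ofReal (s ^ (n - 1)) = ENNReal.ofReal (r ^ n) / n := by
  have hint : IntegrableOn (fun s : ℝ => s ^ (n - 1)) (Ioo 0 r) :=
    (continuous_pow _).integrableOn_Icc.mono_set Ioo_subset_Icc_self
  rw [← ofReal_integral_eq_lintegral_ofReal hint
      ((ae_restrict_iff' measurableSet_Ioo).2 (.of_forall fun s hs => pow_nonneg hs.1.le _)),
    ← integral_Ioc_eq_integral_Ioo, ← intervalIntegral.integral_of_le hr, integral_pow,
    ← Nat.cast_add_one, Nat.sub_add_cancel hn, zero_pow hn.ne', sub_zero,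
    ENNReal.ofReal_div_of_pos (by positivity), ofReal_natCast]

lemma ofReal_div_eq_tsum_pow {s : ℝ} (hs : s ∈ Ioo 0 1) (t : ℝ) (m : ℕ) {k : ℕ} (hk : 0 < k) :
    ENNReal.ofReal (s ^ (m + k - 1) * (1 - s) ^ t) / ENNReal.ofReal (s ^ m * (1 - s) ^ (t + 1))
      = ∑' j : ℕ, ENNReal.ofReal (s ^ (k + j - 1)) := by
  obtain ⟨hs0, hs1⟩ := hs
  have h1s : 0 < 1 - s := by linarith
  have hgeom : HasSum (fun j : ℕ => s ^ (k + j - 1)) (s ^ (k - 1) / (1 - s)) := by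
    have hpow : (fun j : ℕ => s ^ (k + j - 1)) = fun j => s ^ (k - 1) * s ^ j := by
      ext j; rw [← pow_add]; congr 1; omega
    rw [hpow, div_eq_mul_inv]
    exact (hasSum_geometric_of_lt_one hs0.le hs1).mul_left _
  rw [← ENNReal.ofReal_div_of_pos (by positivity),
    ← ENNReal.ofReal_tsum_of_nonneg (fun j => by positivity) hgeom.summable, hgeom.tsum_eq,
    Real.rpow_add_one h1s.ne', show m + k - 1 = m + (k - 1) by omega, pow_add]
  congr 1
  field_simp

lemma lintegral_ofReal_pow_mul_Fop (t : ℝ) {m n : ℕ} (hm : 0 < m) (hn : 0 < n) {φ : ℝ → ℝ≥0∞}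
    (hφ : Measurable φ) :
    ∫⁻ s in Ioo 0 1, ENNReal.ofReal (s ^ (n - 1)) * Fop t m φ s = Fop t (m + n) φ 0 / n := by
  have hw : Measurable fun r : ℝ => ENNReal.ofReal (r ^ (m - 1) * (1 - r) ^ t) * φ r :=
    (by fun_prop : Measurable fun r : ℝ => r ^ (m - 1) * (1 - r) ^ t).ennreal_ofReal.mul hφ
  simp only [Fop]
  rw [lintegral_Ioo_mul_lintegral_Ioo_eq hw (by fun_prop), div_eq_mul_inv,
    ← lintegral_mul_const' _ _ (inv_ne_top.2 (Nat.cast_ne_zero.2 hn.ne'))]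
  refine setLIntegral_congr_fun measurableSet_Ioo fun r hr => ?_
  have hr1 : 0 ≤ 1 - r := by linarith [hr.2]
  rw [lintegral_Ioo_zero_pow_pred hn hr.1.le,
    show r ^ (m + n - 1) * (1 - r) ^ t = r ^ n * (r ^ (m - 1) * (1 - r) ^ t) by
      rw [show m + n - 1 = n + (m - 1) by omega, pow_add]; ring,
    ENNReal.ofReal_mul (pow_nonneg hr.1.le n), div_eq_mul_inv]
  ring

theorem stmt_14_general (t : ℝ) (m k : ℕ) (hm : 0 < m) (hk : 0 < k)
    (φ : ℝ → ℝ≥0∞) (hφ : Measurable φ) :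
    Fop t (m + k) (Gop t m φ) 0 = ∑' j : ℕ, Fop t (m + k + j) φ 0 / ((k + j : ℕ) : ℝ≥0∞) := by
  have hFop : Measurable (Fop t m φ) := (antitone_Fop t m φ).measurable
  calc Fop t (m + k) (Gop t m φ) 0
      = ∫⁻ s in Ioo 0 1, ∑' j : ℕ, ENNReal.ofReal (s ^ (k + j - 1)) * Fop t m φ s := by
        refine setLIntegral_congr_fun measurableSet_Ioo fun s hs => ?_
        rw [Gop, ENNReal.tsum_mul_right, ← ofReal_div_eq_tsum_pow hs t m hk, mul_div_assoc',
          ENNReal.mul_div_right_comm]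
    _ = ∑' j : ℕ, ∫⁻ s in Ioo 0 1, ENNReal.ofReal (s ^ (k + j - 1)) * Fop t m φ s :=
        lintegral_tsum fun j => ((by fun_prop : Measurable fun s : ℝ => ENNReal.ofReal
          (s ^ (k + j - 1))).mul hFop).aemeasurable
    _ = ∑' j : ℕ, Fop t (m + k + j) φ 0 / ((k + j : ℕ) : ℝ≥0∞) := by
        refine tsum_congr fun j => ?_
        rw [lintegral_ofReal_pow_mul_Fop t hm (by omega) hφ, add_assoc]

theorem stmt_14 (t : ℝ) (ht : -1 < t) (m k : ℕ) (hm : 0 < m) (hk : 0 < k)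
    (φ : ℝ → ℝ≥0∞) (hφ : Measurable φ) :
    Fop t (m + k) (Gop t m φ) 0 = ∑' j : ℕ, Fop t (m + k + j) φ 0 / ((k + j : ℕ) : ℝ≥0∞) :=
  stmt_14_general t m k hm hk φ hφ
end

section
/- For t > -1 and integer n ≥ 1, Σ_{j=0}^∞ B(n+1+j, t+1)/(1+j) = -∫₀¹ (1-s)^{n-1} s^t ln(s) ds. -/
open MeasureTheory Real

/-- The Beta function `B(a,b) = ∫₀¹ s^{a-1}(1-s)^{b-1} ds`. -/
noncomputable def Beta (a b : ℝ) : ℝ :=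
  ∫ s in Set.Ioo (0:ℝ) 1, s ^ (a - 1) * (1 - s) ^ (b - 1)

lemma integrableOn_rpow_Ioo {r : ℝ} (hr : -1 < r) :
    IntegrableOn (fun s : ℝ => s ^ r) (Set.Ioo (0:ℝ) 1) := by
  have h := intervalIntegral.intervalIntegrable_rpow' (a := 0) (b := 1) hr
  rw [intervalIntegrable_iff_integrableOn_Ioc_of_le zero_le_one] at h
  exact h.mono_set Set.Ioo_subset_Ioc_self

lemma sub_integral_flip (m : ℕ) (t : ℝ) :
    (∫ s in Set.Ioo (0:ℝ) 1, s ^ m * (1 - s) ^ t)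
      = ∫ s in Set.Ioo (0:ℝ) 1, (1 - s) ^ m * s ^ t := by
  rw [← integral_Ioc_eq_integral_Ioo, ← integral_Ioc_eq_integral_Ioo,
    ← intervalIntegral.integral_of_le zero_le_one,
    ← intervalIntegral.integral_of_le zero_le_one]
  have h := intervalIntegral.integral_comp_sub_left
    (a := 0) (b := 1) (fun x : ℝ => x ^ m * (1 - x) ^ t) 1
  simp only [sub_zero, sub_self] at h
  rw [← h]
  apply intervalIntegral.integral_congr
  intro x _
  simp [sub_sub_cancel]

theorem stmt_16 (t : ℝ) (ht : -1 < t) (n : ℕ) (hn : 1 ≤ n) :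
    (∑' j : ℕ, Beta (n + 1 + j) (t + 1) / (1 + j)) =
      -∫ s in Set.Ioo (0:ℝ) 1, (1 - s) ^ (n - 1) * s ^ t * Real.log s := by
  set F : ℕ → ℝ → ℝ := fun j s => (1 - s) ^ (n + j) * s ^ t / (1 + j) with hFdef
  set g : ℝ → ℝ := fun s => (1 - s) ^ (n - 1) * s ^ t * (-Real.log s) with hgdef
  -- pointwise sum of the series
  have hptF : ∀ s ∈ Set.Ioo (0:ℝ) 1, HasSum (fun j => F j s) (g s) := by
    intro s hs
    have habs : |1 - s| < 1 := by
      rw [abs_lt]; constructor <;> [linarith [hs.2]; linarith [hs.1]]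
    have h := (Real.hasSum_pow_div_log_of_abs_lt_one habs).mul_left
      ((1 - s) ^ (n - 1) * s ^ t)
    have heq : (fun j : ℕ => (1 - s) ^ (n - 1) * s ^ t * ((1 - s) ^ (j + 1) / (↑j + 1)))
        = fun j => F j s := by
      funext j
      have hnm : n - 1 + (j + 1) = n + j := by omega
      simp only [hFdef]
      rw [← hnm, pow_add]
      ring_nf
    rw [heq] at h
    have : 1 - (1 - s) = s := by ring
    rw [this] at h
    simpa [hgdef] using h
  -- nonnegativity of F on Ioo
  have hFnn : ∀ j : ℕ, ∀ s ∈ Set.Ioo (0:ℝ) 1, 0 ≤ F j s := by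
    intro j s hs
    apply div_nonneg
    · exact mul_nonneg (pow_nonneg (by linarith [hs.2]) _) (Real.rpow_nonneg hs.1.le t)
    · positivity
  -- F j ≤ s ^ t on Ioo
  have hFle : ∀ j : ℕ, ∀ s ∈ Set.Ioo (0:ℝ) 1, F j s ≤ s ^ t := by
    intro j s hs
    have h1 : (1 - s) ^ (n + j) ≤ 1 :=
      pow_le_one₀ (by linarith [hs.2]) (by linarith [hs.1])
    have h2 : (1 - s) ^ (n + j) * s ^ t ≤ s ^ t := by
      nlinarith [Real.rpow_nonneg hs.1.le t]
    calc F j s ≤ (1 - s) ^ (n + j) * s ^ t := by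
          apply div_le_self
          · exact mul_nonneg (pow_nonneg (by linarith [hs.2]) _) (Real.rpow_nonneg hs.1.le t)
          · have : (0:ℝ) ≤ j := Nat.cast_nonneg j
            linarith
      _ ≤ s ^ t := h2
  -- continuity/measurability of F j
  have hFcont : ∀ j : ℕ, ContinuousOn (F j) (Set.Ioo (0:ℝ) 1) := by
    intro j
    apply ContinuousOn.div_const
    apply ContinuousOn.mul
    · exact ((continuous_const.sub continuous_id).pow _).continuousOn
    · intro s hs
      exact (Real.continuousAt_rpow_const s t (Or.inl (ne_of_gt hs.1))).continuousWithinAt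
  -- integrability of F j
  have hFint : ∀ j : ℕ, IntegrableOn (F j) (Set.Ioo (0:ℝ) 1) := by
    intro j
    apply Integrable.mono' (integrableOn_rpow_Ioo ht)
      ((hFcont j).aestronglyMeasurable measurableSet_Ioo)
    filter_upwards [ae_restrict_mem measurableSet_Ioo] with s hs
    rw [Real.norm_of_nonneg (hFnn j s hs)]
    exact hFle j s hs
  -- g nonneg on Ioo
  have hgnn : ∀ s ∈ Set.Ioo (0:ℝ) 1, 0 ≤ g s := by
    intro s hs
    apply mul_nonneg
    · exact mul_nonneg (pow_nonneg (by linarith [hs.2]) _) (Real.rpow_nonneg hs.1.le t)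
    · simp only [neg_nonneg]
      exact Real.log_nonpos hs.1.le hs.2.le
  -- g dominated
  have hgle : ∀ s ∈ Set.Ioo (0:ℝ) 1, g s ≤ s ^ ((t - 1)/2) * (2/(t+1)) := by
    intro s hs
    have hε : (0:ℝ) < (t + 1)/2 := by linarith
    have hlog : -Real.log s ≤ s ^ (-((t+1)/2)) * (2/(t+1)) := by
      have h1 : Real.log s⁻¹ ≤ (s⁻¹) ^ ((t+1)/2) / ((t+1)/2) :=
        Real.log_le_rpow_div (inv_nonneg.mpr hs.1.le) hε
      rw [Real.log_inv] at h1
      have h2 : (s⁻¹) ^ ((t+1)/2) = s ^ (-((t+1)/2)) := by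
        rw [Real.inv_rpow hs.1.le, ← Real.rpow_neg hs.1.le]
      rw [h2] at h1
      calc -Real.log s ≤ s ^ (-((t+1)/2)) / ((t+1)/2) := h1
        _ = s ^ (-((t+1)/2)) * (2/(t+1)) := by rw [div_eq_mul_inv, inv_div]
    have h1 : (1 - s) ^ (n - 1) ≤ 1 :=
      pow_le_one₀ (by linarith [hs.2]) (by linarith [hs.1])
    have hlognn : 0 ≤ -Real.log s := by
      simp only [neg_nonneg]; exact Real.log_nonpos hs.1.le hs.2.le
    have hst : (0:ℝ) ≤ s ^ t := Real.rpow_nonneg hs.1.le t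
    calc g s ≤ 1 * s ^ t * (-Real.log s) := by
          apply mul_le_mul_of_nonneg_right _ hlognn
          exact mul_le_mul_of_nonneg_right h1 hst
      _ = s ^ t * (-Real.log s) := by ring
      _ ≤ s ^ t * (s ^ (-((t+1)/2)) * (2/(t+1))) :=
          mul_le_mul_of_nonneg_left hlog hst
      _ = s ^ (t + -((t+1)/2)) * (2/(t+1)) := by
          rw [Real.rpow_add hs.1]; ring
      _ = s ^ ((t - 1)/2) * (2/(t+1)) := by ring_nf
  -- measurability of g
  have hgcont : ContinuousOn g (Set.Ioo (0:ℝ) 1) := by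
    apply ContinuousOn.mul
    · apply ContinuousOn.mul
      · exact ((continuous_const.sub continuous_id).pow _).continuousOn
      · intro s hs
        exact (Real.continuousAt_rpow_const s t (Or.inl (ne_of_gt hs.1))).continuousWithinAt
    · intro s hs
      exact (Real.continuousAt_log (ne_of_gt hs.1)).neg.continuousWithinAt
  -- integrability of g
  have hgint : IntegrableOn g (Set.Ioo (0:ℝ) 1) := by
    have hdom : IntegrableOn (fun s : ℝ => s ^ ((t - 1)/2) * (2/(t+1)))
        (Set.Ioo (0:ℝ) 1) := (integrableOn_rpow_Ioo (by linarith)).mul_const _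
    apply Integrable.mono' hdom (hgcont.aestronglyMeasurable measurableSet_Ioo)
    filter_upwards [ae_restrict_mem measurableSet_Ioo] with s hs
    rw [Real.norm_of_nonneg (hgnn s hs)]
    exact hgle s hs
  -- Beta term identity
  have hBeta : ∀ j : ℕ, Beta (n + 1 + j) (t + 1) / (1 + j)
      = ∫ s in Set.Ioo (0:ℝ) 1, F j s := by
    intro j
    have h1 : Beta (n + 1 + j) (t + 1)
        = ∫ s in Set.Ioo (0:ℝ) 1, s ^ (n + j) * (1 - s) ^ t := by
      unfold Beta
      apply setIntegral_congr_fun measurableSet_Ioo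
      intro s _
      show s ^ ((n:ℝ) + 1 + j - 1) * (1 - s) ^ (t + 1 - 1) = s ^ (n + j) * (1 - s) ^ t
      have h2 : (n:ℝ) + 1 + j - 1 = ((n + j : ℕ) : ℝ) := by push_cast; ring
      rw [h2, Real.rpow_natCast]
      norm_num
    rw [h1, sub_integral_flip, ← integral_div]
  -- summability of the integrals
  have hsum : Summable (fun j => ∫ s in Set.Ioo (0:ℝ) 1, F j s) := by
    apply summable_of_sum_range_le (c := ∫ s in Set.Ioo (0:ℝ) 1, g s)
    · intro j
      exact setIntegral_nonneg measurableSet_Ioo (hFnn j)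
    · intro N
      rw [← integral_finset_sum _ (fun j _ => hFint j)]
      apply setIntegral_mono_on (integrable_finset_sum _ (fun j _ => hFint j)) hgint
        measurableSet_Ioo
      intro s hs
      exact sum_le_hasSum (Finset.range N) (fun j _ => hFnn j s hs) (hptF s hs)
  -- swap sum and integral
  have hswap : (∑' j, ∫ s in Set.Ioo (0:ℝ) 1, F j s)
      = ∫ s in Set.Ioo (0:ℝ) 1, ∑' j, F j s := by
    apply integral_tsum_of_summable_integral_norm (fun j => hFint j)
    have : (fun j => ∫ s in Set.Ioo (0:ℝ) 1, ‖F j s‖)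
        = fun j => ∫ s in Set.Ioo (0:ℝ) 1, F j s := by
      funext j
      apply setIntegral_congr_fun measurableSet_Ioo
      intro s hs
      exact Real.norm_of_nonneg (hFnn j s hs)
    rw [this]
    exact hsum
  calc (∑' j : ℕ, Beta (n + 1 + j) (t + 1) / (1 + j))
      = ∑' j, ∫ s in Set.Ioo (0:ℝ) 1, F j s := by
        apply tsum_congr; intro j; exact hBeta j
    _ = ∫ s in Set.Ioo (0:ℝ) 1, ∑' j, F j s := hswap
    _ = ∫ s in Set.Ioo (0:ℝ) 1, g s := by
        apply setIntegral_congr_fun measurableSet_Ioo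
        intro s hs
        exact (hptF s hs).tsum_eq
    _ = ∫ s in Set.Ioo (0:ℝ) 1, -((1 - s) ^ (n - 1) * s ^ t * Real.log s) := by
        apply setIntegral_congr_fun measurableSet_Ioo
        intro s _
        simp only [hgdef]; ring
    _ = -∫ s in Set.Ioo (0:ℝ) 1, (1 - s) ^ (n - 1) * s ^ t * Real.log s := by
        rw [integral_neg]
end
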